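/- arXiv:2403.14631 — 2 statements merged into one kernel-verified Lean document; each statement's English description precedes it below -/
import Mathlib

section
/- Let C > 0 and let φ : ℝ → ℂ be a measurable function satisfying ‖φ(t)‖ ≤ C·|t|^{1/2} for all t ≠ 0. Then for every real Y > 0, the function t ↦ φ(t)·(sin(πYt)/(πYt))² is integrable on ℝ and ‖(1/π)·∫_{−∞}^{∞} φ(t)·(sin(πYt)/(πYt))² dt‖ ≤ (2C/π²)·Y^{−3/2}. -/
/-!
Pointwise `‖φ t‖ · sincSq Y t ≤ C (πY)⁻² sin²(πYt) |t|^{-3/2}`, so everything rests on the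
evaluation `∫ sin²(at) |t|^{-3/2} dt = 2√(πa)`, i.e. `∫₀^∞ (1 - cos bt) t^{-3/2} dt = √(2πb)`.
That integral is computed by subordination: writing `t^{-3/2} = Γ(3/2)⁻¹ ∫₀^∞ s^{1/2} e^{-st} ds`
and using the Laplace transform of `1 - cos bt` turns it into `b² ∫₀^∞ s^{-1/2} / (s² + b²) ds`;
writing `(s² + c)⁻¹ = ∫₀^∞ e^{-(s² + c)y} dy` turns this into `Γ(1/4) Γ(3/4) c^{-3/4} / 2`, and
Euler's reflection formula gives `Γ(1/4) Γ(3/4) = √2 π`. Both integrands are nonnegative, so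
Tonelli justifies the exchanges of integration.
-/

open MeasureTheory Real

/-- The squared sinc kernel `(sin(πYt)/(πYt))²`, extended by the value `1` at `t = 0`. -/
noncomputable def sincSq (Y t : ℝ) : ℝ :=
  if t = 0 then 1 else (Real.sin (π * Y * t) / (π * Y * t)) ^ 2

open Set Function Filter

theorem integrable_uncurry_of_nonneg {α β : Type*} [MeasurableSpace α] [MeasurableSpace β]
    {μ : Measure α} {ν : Measure β} [SFinite ν] {f : α → β → ℝ}
    (hf : AEStronglyMeasurable (uncurry f) (μ.prod ν)) (hf_nonneg : ∀ᵐ x ∂μ, ∀ᵐ y ∂ν, 0 ≤ f x y)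
    (hf_left : ∀ᵐ x ∂μ, Integrable (f x) ν) (hf_int : Integrable (fun x => ∫ y, f x y ∂ν) μ) :
    Integrable (uncurry f) (μ.prod ν) := by
  refine (integrable_prod_iff hf).2 ⟨hf_left, hf_int.congr ?_⟩
  filter_upwards [hf_nonneg] with x hx
  exact integral_congr_ae (by filter_upwards [hx] with y hy; exact (norm_of_nonneg hy).symm)

theorem integrable_comp_abs {E : Type*} [NormedAddCommGroup E] {f : ℝ → E}
    (hf : IntegrableOn f (Ioi 0)) : Integrable (fun x => f |x|) := by
  have hpos := (Iff.mpr integrableOn_Ici_iff_integrableOn_Ioi hf).integrable_indicator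
    measurableSet_Ici
  have hneg := (hf.integrable_indicator measurableSet_Ioi).comp_neg
  refine (hpos.add hneg).congr (Eventually.of_forall fun x => ?_)
  rcases lt_trichotomy x 0 with hx | rfl | hx
  · simp [hx.not_ge, hx, abs_of_neg hx]
  · simp
  · simp [hx.le, abs_of_pos hx]

theorem integral_mul_exp_neg_mul_Ioi_zero (k : ℝ) {a : ℝ} (ha : 0 < a) :
    ∫ y in Ioi 0, k * exp (-a * y) = k / a := by
  rw [integral_const_mul, integral_exp_mul_Ioi (by linarith), mul_zero, exp_zero, neg_div_neg_eq,
    mul_one_div]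

section Laplace

open Complex

theorem one_sub_cos_mul_exp_neg_mul_eq_re (s b t : ℝ) :
    (1 - Real.cos (b * t)) * Real.exp (-(s * t))
      = (cexp (-s * t) - cexp ((-s + b * I) * t)).re := by
  simp [Complex.exp_re, sub_mul, mul_comm]

variable {s : ℝ} (hs : 0 < s) (b : ℝ)
include hs

theorem integrableOn_cexp_neg_mul_sub_cexp :
    IntegrableOn (fun t : ℝ => cexp (-s * t) - cexp ((-s + b * I) * t)) (Ioi 0) :=
  (integrableOn_exp_mul_complex_Ioi (by simpa using hs) 0).sub
    (integrableOn_exp_mul_complex_Ioi (by simpa using hs) 0)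

theorem integrableOn_one_sub_cos_mul_exp_neg_mul :
    IntegrableOn (fun t => (1 - Real.cos (b * t)) * Real.exp (-(s * t))) (Ioi 0) := by
  simp only [one_sub_cos_mul_exp_neg_mul_eq_re]
  exact (integrableOn_cexp_neg_mul_sub_cexp hs b).re

theorem integral_one_sub_cos_mul_exp_neg_mul :
    ∫ t in Ioi 0, (1 - Real.cos (b * t)) * Real.exp (-(s * t)) = b ^ 2 / (s * (s ^ 2 + b ^ 2)) := by
  have h₁ : (-s : ℂ).re < 0 := by simpa using hs
  have h₂ : (-s + b * I).re < 0 := by simpa using hs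
  simp only [one_sub_cos_mul_exp_neg_mul_eq_re, ← RCLike.re_to_complex]
  rw [integral_re (integrableOn_cexp_neg_mul_sub_cexp hs b),
    integral_sub (integrableOn_exp_mul_complex_Ioi h₁ 0) (integrableOn_exp_mul_complex_Ioi h₂ 0),
    integral_exp_mul_complex_Ioi h₁, integral_exp_mul_complex_Ioi h₂]
  simp only [RCLike.re_to_complex, ofReal_zero, mul_zero, Complex.exp_zero, sub_re, div_re,
    normSq_apply, neg_re, neg_im, one_re, one_im, ofReal_re, ofReal_im, add_re, add_im, mul_re,
    mul_im, I_re, I_im, neg_zero, zero_mul, add_zero, sub_zero, mul_one, neg_mul_neg, zero_add,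
    zero_div, one_mul, ← sq]
  have : s ^ 2 + b ^ 2 ≠ 0 := by positivity
  field_simp
  ring

end Laplace

theorem integral_rpow_neg_half_mul_exp_neg_mul_sq {y : ℝ} (hy : 0 < y) :
    ∫ s in Ioi 0, s ^ (-(1 : ℝ) / 2) * exp (-y * s ^ 2)
      = y ^ (-(1 : ℝ) / 4) * (Gamma (1 / 4) / 2) := by
  simp_rw [← rpow_two]
  rw [integral_rpow_mul_exp_neg_mul_rpow two_pos (by norm_num) hy]
  norm_num
  ring

theorem integral_rpow_neg_quarter_mul_exp_neg_mul {c : ℝ} (hc : 0 < c) :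
    ∫ y in Ioi 0, y ^ (-(1 : ℝ) / 4) * exp (-c * y) = c ^ (-(3 : ℝ) / 4) * Gamma (3 / 4) := by
  have := integral_rpow_mul_exp_neg_mul_rpow (p := 1) (q := -(1 : ℝ) / 4) one_pos (by norm_num) hc
  simp only [rpow_one] at this
  rw [this]
  norm_num

theorem integral_rpow_half_mul_exp_neg_mul {t : ℝ} (ht : 0 < t) :
    ∫ s in Ioi 0, s ^ (1 / 2 : ℝ) * exp (-t * s) = t ^ (-(3 : ℝ) / 2) * (√π / 2) := by
  have := integral_rpow_mul_exp_neg_mul_rpow (p := 1) (q := 1 / 2) one_pos (by norm_num) ht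
  simp only [rpow_one] at this
  rw [this, show ((1 : ℝ) / 2 + 1) / 1 = 1 / 2 + 1 by norm_num, Gamma_add_one (by norm_num),
    Gamma_one_half_eq]
  ring_nf

theorem Gamma_one_quarter_mul_Gamma_three_quarters : Gamma (1 / 4) * Gamma (3 / 4) = √2 * π := by
  have h := Gamma_mul_Gamma_one_sub (1 / 4)
  rw [show π * (1 / 4) = π / 4 by ring, sin_pi_div_four,
    show (1 : ℝ) - 1 / 4 = 3 / 4 by norm_num] at h
  rw [h]
  have : √2 * √2 = 2 := mul_self_sqrt zero_le_two
  field_simp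
  linarith

theorem rpow_mul_exp_neg_sq_add_mul (q s c y : ℝ) :
    s ^ q * exp (-(s ^ 2 + c) * y) = exp (-c * y) * (s ^ q * exp (-y * s ^ 2)) := by
  rw [mul_left_comm, ← exp_add]
  ring_nf

theorem integral_rpow_neg_half_mul_exp_neg_sq_add_mul (c : ℝ) {y : ℝ} (hy : 0 < y) :
    ∫ s in Ioi 0, s ^ (-(1 : ℝ) / 2) * exp (-(s ^ 2 + c) * y)
      = y ^ (-(1 : ℝ) / 4) * exp (-c * y) * (Gamma (1 / 4) / 2) := by
  simp_rw [rpow_mul_exp_neg_sq_add_mul]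
  rw [integral_const_mul, integral_rpow_neg_half_mul_exp_neg_mul_sq hy]
  ring

section Subordination

variable {c : ℝ} (hc : 0 < c)
include hc

theorem integrable_rpow_neg_half_mul_exp_neg_sq_add_mul :
    Integrable (uncurry fun y s : ℝ => s ^ (-(1 : ℝ) / 2) * exp (-(s ^ 2 + c) * y))
      ((volume.restrict (Ioi 0)).prod (volume.restrict (Ioi 0))) := by
  refine integrable_uncurry_of_nonneg (by fun_prop : Measurable _).aestronglyMeasurable ?_ ?_ ?_
  · refine ae_restrict_of_forall_mem measurableSet_Ioi fun y _ => ?_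
    exact ae_restrict_of_forall_mem measurableSet_Ioi fun s (hs : 0 < s) => by positivity
  · refine ae_restrict_of_forall_mem measurableSet_Ioi fun y (hy : 0 < y) => ?_
    simp_rw [rpow_mul_exp_neg_sq_add_mul, ← rpow_two]
    exact (integrableOn_rpow_mul_exp_neg_mul_rpow (by norm_num) two_pos hy).const_mul _
  · refine IntegrableOn.congr_fun
      (f := fun y => y ^ (-(1 : ℝ) / 4) * exp (-c * y) * (Gamma (1 / 4) / 2)) ?_
      (fun y hy => (integral_rpow_neg_half_mul_exp_neg_sq_add_mul c hy).symm) measurableSet_Ioi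
    have := integrableOn_rpow_mul_exp_neg_mul_rpow (p := 1) (s := -(1 : ℝ) / 4)
      (by norm_num) one_pos hc
    simp only [rpow_one] at this
    exact this.mul_const _

theorem integrableOn_rpow_neg_half_div_sq_add :
    IntegrableOn (fun s : ℝ => s ^ (-(1 : ℝ) / 2) / (s ^ 2 + c)) (Ioi 0) := by
  refine (integrable_rpow_neg_half_mul_exp_neg_sq_add_mul hc).integral_prod_right.congr
    (Eventually.of_forall fun s => ?_)
  simp only [uncurry_apply_pair]
  exact integral_mul_exp_neg_mul_Ioi_zero _ (by positivity)

theorem integral_rpow_neg_half_div_sq_add :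
    ∫ s in Ioi 0, s ^ (-(1 : ℝ) / 2) / (s ^ 2 + c) = π / √2 * c ^ (-(3 : ℝ) / 4) := by
  have hswap := integral_integral_swap (integrable_rpow_neg_half_mul_exp_neg_sq_add_mul hc)
  rw [setIntegral_congr_fun measurableSet_Ioi fun y hy =>
      integral_rpow_neg_half_mul_exp_neg_sq_add_mul c hy,
    integral_mul_const, integral_rpow_neg_quarter_mul_exp_neg_mul hc,
    setIntegral_congr_fun measurableSet_Ioi fun s _ =>
      integral_mul_exp_neg_mul_Ioi_zero _ (by positivity)] at hswap
  rw [← hswap]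
  have h2 : √2 * √2 = 2 := mul_self_sqrt zero_le_two
  field_simp
  linear_combination √2 * Gamma_one_quarter_mul_Gamma_three_quarters + π * h2

end Subordination

theorem integral_one_sub_cos_mul_rpow_half_mul_exp_neg_mul (b : ℝ) {s : ℝ} (hs : 0 < s) :
    ∫ t in Ioi 0, (1 - Real.cos (b * t)) * (s ^ (1 / 2 : ℝ) * exp (-t * s))
      = b ^ 2 * (s ^ (-(1 : ℝ) / 2) / (s ^ 2 + b ^ 2)) := by
  have (t : ℝ) : (1 - Real.cos (b * t)) * (s ^ (1 / 2 : ℝ) * exp (-t * s))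
      = s ^ (1 / 2 : ℝ) * ((1 - Real.cos (b * t)) * exp (-(s * t))) := by ring_nf
  simp_rw [this]
  rw [integral_const_mul, integral_one_sub_cos_mul_exp_neg_mul hs,
    show (-(1 : ℝ) / 2) = 1 / 2 - 1 by norm_num, rpow_sub_one hs.ne']
  field_simp

section OneSubCos

variable {b : ℝ} (hb : 0 < b)
include hb

theorem integrable_one_sub_cos_mul_rpow_half_mul_exp_neg_mul :
    Integrable (uncurry fun s t : ℝ => (1 - Real.cos (b * t)) * (s ^ (1 / 2 : ℝ) * exp (-t * s)))
      ((volume.restrict (Ioi 0)).prod (volume.restrict (Ioi 0))) := by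
  refine integrable_uncurry_of_nonneg (by fun_prop : Measurable _).aestronglyMeasurable ?_ ?_ ?_
  · refine ae_restrict_of_forall_mem measurableSet_Ioi fun s (hs : 0 < s) => ?_
    refine ae_restrict_of_forall_mem measurableSet_Ioi fun t _ => ?_
    have : 0 ≤ 1 - Real.cos (b * t) := sub_nonneg.2 (cos_le_one _)
    positivity
  · refine ae_restrict_of_forall_mem measurableSet_Ioi fun s hs => ?_
    refine IntegrableOn.congr_fun ((integrableOn_one_sub_cos_mul_exp_neg_mul hs b).mul_const
      (s ^ (1 / 2 : ℝ))) (fun t _ => by ring_nf) measurableSet_Ioi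
  · refine IntegrableOn.congr_fun ((integrableOn_rpow_neg_half_div_sq_add (c := b ^ 2)
      (by positivity)).const_mul (b ^ 2)) (fun s hs => ?_) measurableSet_Ioi
    exact (integral_one_sub_cos_mul_rpow_half_mul_exp_neg_mul b hs).symm

theorem integrableOn_one_sub_cos_mul_rpow :
    IntegrableOn (fun t => (1 - Real.cos (b * t)) * t ^ (-(3 : ℝ) / 2)) (Ioi 0) := by
  have := (integrable_one_sub_cos_mul_rpow_half_mul_exp_neg_mul hb).integral_prod_right.const_mul
    (2 / √π)
  refine IntegrableOn.congr_fun this (fun t ht => ?_) measurableSet_Ioi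
  simp only [uncurry_apply_pair]
  rw [integral_const_mul, integral_rpow_half_mul_exp_neg_mul ht]
  field_simp

theorem integral_one_sub_cos_mul_rpow :
    ∫ t in Ioi 0, (1 - Real.cos (b * t)) * t ^ (-(3 : ℝ) / 2) = √(2 * π * b) := by
  have hswap := integral_integral_swap (integrable_one_sub_cos_mul_rpow_half_mul_exp_neg_mul hb)
  have hsqrt_b : b ^ 2 * (b ^ 2) ^ (-(3 : ℝ) / 4) = √b := by
    rw [sqrt_eq_rpow, ← rpow_natCast b 2, ← rpow_mul hb.le, ← rpow_add hb]
    norm_num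
  rw [setIntegral_congr_fun measurableSet_Ioi fun s hs =>
      integral_one_sub_cos_mul_rpow_half_mul_exp_neg_mul b hs, integral_const_mul,
    integral_rpow_neg_half_div_sq_add (by positivity), mul_left_comm, hsqrt_b] at hswap
  have hinner (t : ℝ) (ht : t ∈ Ioi 0) :
      ∫ s in Ioi 0, (1 - Real.cos (b * t)) * (s ^ (1 / 2 : ℝ) * exp (-t * s))
        = (1 - Real.cos (b * t)) * t ^ (-(3 : ℝ) / 2) * (√π / 2) := by
    rw [integral_const_mul, integral_rpow_half_mul_exp_neg_mul ht, mul_assoc]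
  rw [setIntegral_congr_fun measurableSet_Ioi hinner, integral_mul_const] at hswap
  rw [sqrt_mul (by positivity), sqrt_mul zero_le_two]
  refine mul_right_cancel₀ (by positivity : √π / 2 ≠ 0) (hswap.symm.trans ?_)
  field_simp
  rw [sq_sqrt zero_le_two, sq_sqrt pi_pos.le]
  ring

end OneSubCos

section SinSq

variable {a : ℝ} (ha : 0 < a)
include ha

theorem sin_sq_mul_abs_rpow_eq_one_sub_cos (t : ℝ) :
    Real.sin (a * t) ^ 2 * |t| ^ (-(3 : ℝ) / 2)
      = 1 / 2 * ((1 - Real.cos (2 * a * |t|)) * |t| ^ (-(3 : ℝ) / 2)) := by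
  rw [sin_sq_eq_half_sub, ← cos_abs (2 * (a * t)), abs_mul, abs_mul, abs_two, abs_of_pos ha]
  ring_nf

theorem integrable_sin_sq_mul_abs_rpow :
    Integrable (fun t => Real.sin (a * t) ^ 2 * |t| ^ (-(3 : ℝ) / 2)) := by
  simp_rw [sin_sq_mul_abs_rpow_eq_one_sub_cos ha]
  exact (integrable_comp_abs (integrableOn_one_sub_cos_mul_rpow (by positivity))).const_mul _

theorem integral_sin_sq_mul_abs_rpow :
    ∫ t, Real.sin (a * t) ^ 2 * |t| ^ (-(3 : ℝ) / 2) = 2 * √(π * a) := by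
  simp_rw [sin_sq_mul_abs_rpow_eq_one_sub_cos ha]
  rw [integral_const_mul,
    integral_comp_abs (f := fun t => (1 - Real.cos (2 * a * t)) * t ^ (-(3 : ℝ) / 2)),
    integral_one_sub_cos_mul_rpow (by positivity), show 2 * π * (2 * a) = 2 ^ 2 * (π * a) by ring,
    sqrt_mul (by positivity), sqrt_sq zero_le_two]
  ring

end SinSq

theorem sincSq_nonneg (Y t : ℝ) : 0 ≤ sincSq Y t := by
  unfold sincSq
  split_ifs <;> positivity

theorem measurable_sincSq (Y : ℝ) : Measurable (sincSq Y) :=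
  Measurable.ite (measurableSet_singleton 0) measurable_const (by fun_prop)

theorem rpow_half_mul_sincSq (Y : ℝ) {t : ℝ} (ht : t ≠ 0) :
    |t| ^ (1 / 2 : ℝ) * sincSq Y t
      = Real.sin (π * Y * t) ^ 2 * |t| ^ (-(3 : ℝ) / 2) / (π * Y) ^ 2 := by
  have habs : |t| ^ (1 / 2 : ℝ) = |t| ^ (-(3 : ℝ) / 2) * t ^ 2 := by
    rw [← sq_abs, ← rpow_natCast, ← rpow_add (abs_pos.2 ht)]
    norm_num
  rw [sincSq, if_neg ht, habs, div_pow, mul_pow, mul_pow]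
  rcases eq_or_ne Y 0 with rfl | hY
  · simp
  · field_simp

theorem norm_mul_sincSq_le {z : ℂ} {C Y t : ℝ} (ht : t ≠ 0) (hz : ‖z‖ ≤ C * |t| ^ (1 / 2 : ℝ)) :
    ‖z * (sincSq Y t : ℂ)‖ ≤ C / (π * Y) ^ 2 * (Real.sin (π * Y * t) ^ 2 * |t| ^ (-(3 : ℝ) / 2)) :=
  calc ‖z * (sincSq Y t : ℂ)‖ = ‖z‖ * sincSq Y t := by
        rw [norm_mul, Complex.norm_real, norm_of_nonneg (sincSq_nonneg Y t)]
    _ ≤ C * |t| ^ (1 / 2 : ℝ) * sincSq Y t := by gcongr; exact sincSq_nonneg Y t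
    _ = _ := by rw [mul_assoc, rpow_half_mul_sincSq Y ht]; ring

theorem archimedean_integral_bound_general (C : ℝ) (φ : ℝ → ℂ)
    (hφ : Measurable φ) (hbound : ∀ t : ℝ, t ≠ 0 → ‖φ t‖ ≤ C * |t| ^ ((1 : ℝ) / 2))
    (Y : ℝ) (hY : 0 < Y) :
    Integrable (fun t : ℝ => φ t * (sincSq Y t : ℂ)) ∧
    ‖(1 / (π : ℂ)) * ∫ t : ℝ, φ t * (sincSq Y t : ℂ)‖
      ≤ (2 * C / π ^ 2) * Y ^ (-(3 : ℝ) / 2) := by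
  have ha : 0 < π * Y := by positivity
  set M := fun t => C / (π * Y) ^ 2 * (Real.sin (π * Y * t) ^ 2 * |t| ^ (-(3 : ℝ) / 2))
  have hM : Integrable M := (integrable_sin_sq_mul_abs_rpow ha).const_mul _
  have hle : ∀ᵐ t, ‖φ t * (sincSq Y t : ℂ)‖ ≤ M t := by
    filter_upwards [Measure.ae_ne volume 0] with t ht using norm_mul_sincSq_le ht (hbound t ht)
  refine ⟨hM.mono' (hφ.mul (measurable_sincSq Y).complex_ofReal).aestronglyMeasurable hle, ?_⟩
  have hY' : Y ^ (-(3 : ℝ) / 2) = √Y / Y ^ 2 := by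
    rw [sqrt_eq_rpow, ← rpow_natCast, ← rpow_sub hY]
    norm_num
  calc ‖(1 / (π : ℂ)) * ∫ t, φ t * (sincSq Y t : ℂ)‖
      ≤ 1 / π * ∫ t, M t := by
        rw [norm_mul, norm_div, norm_one, Complex.norm_real, norm_of_nonneg pi_pos.le]
        gcongr
        exact norm_integral_le_of_norm_le hM hle
    _ = (2 * C / π ^ 2) * Y ^ (-(3 : ℝ) / 2) := by
        rw [integral_const_mul, integral_sin_sq_mul_abs_rpow ha, ← mul_assoc π, sqrt_mul' _ hY.le,
          sqrt_mul_self pi_pos.le, hY']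
        field_simp

/-- Let `C > 0` and let `φ : ℝ → ℂ` be a measurable function satisfying
`‖φ(t)‖ ≤ C·|t|^{1/2}` for all `t ≠ 0`. Then for every real `Y > 0`, the function
`t ↦ φ(t)·(sin(πYt)/(πYt))²` is integrable on `ℝ` and
`‖(1/π)·∫ φ(t)·(sin(πYt)/(πYt))² dt‖ ≤ (2C/π²)·Y^{−3/2}`. -/
theorem archimedean_integral_bound (C : ℝ) (hC : 0 < C) (φ : ℝ → ℂ)
    (hφ : Measurable φ) (hbound : ∀ t : ℝ, t ≠ 0 → ‖φ t‖ ≤ C * |t| ^ ((1 : ℝ) / 2))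
    (Y : ℝ) (hY : 0 < Y) :
    Integrable (fun t : ℝ => φ t * (sincSq Y t : ℂ)) ∧
    ‖(1 / (π : ℂ)) * ∫ t : ℝ, φ t * (sincSq Y t : ℂ)‖
      ≤ (2 * C / π ^ 2) * Y ^ (-(3 : ℝ) / 2) :=
  archimedean_integral_bound_general C φ hφ hbound Y hY
end

section
/- Under the independence and variance hypotheses on (a_p), there exist constants d₁, d₂ > 0 and X₀ such that for every real X ≥ X₀, the random variable (1/log X)·∑_{X < p ≤ X²} a_p·(log p)/p has variance between d₁ and d₂. -/
/-!
By independence the variance is `(log X)⁻² ∑ (log p / p)² Var(a_p)`, and `Var(a_p) ≍ p` together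
with `log X < log p ≤ 2 log X` makes it `≍ (log X)⁻¹ ∑_{X<p≤X²} log p / p`. By Mertens' estimate
`∑_{n≤x} Λ(n) / n = log x + O(1)`, which follows from `log n! = ∑_{d≤n} Λ(d) ⌊n/d⌋` and
Chebyshev's bound `ψ(x) = O(x)`, the last sum is `log X + O(1)`: the prime powers `p ^ k`, `k ≥ 2`,
in `(X, X²]` contribute at most `(ψ - θ)(X²) / X = O(1)`.
-/

open MeasureTheory ProbabilityTheory Finset

open scoped Classical in
/-- The finite set of primes `p` with `X < p ≤ Y` (for real `X, Y`). -/
noncomputable def primesIn (X Y : ℝ) : Finset ℕ :=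
  (Finset.range (⌊Y⌋₊ + 1)).filter fun p => p.Prime ∧ X < (p : ℝ) ∧ (p : ℝ) ≤ Y

open Real Chebyshev
open ArithmeticFunction (vonMangoldt_nonneg vonMangoldt_apply_prime vonMangoldt_sum)
open scoped Nat ArithmeticFunction.vonMangoldt

theorem log_factorial_eq_sum_vonMangoldt_mul (n : ℕ) :
    log (n ! : ℝ) = ∑ d ∈ Ioc 0 n, Λ d * (n / d : ℕ) := by
  have hlog : log (n ! : ℝ) = ∑ m ∈ Ioc 0 n, log m := by
    rw [← prod_Ico_id_eq_factorial, show Ico 1 (n + 1) = Ioc 0 n from Ico_add_one_add_one_eq_Ioc 0 n,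
      Nat.cast_prod, log_prod fun m hm => by have := (mem_Ioc.1 hm).1; positivity]
  calc log (n ! : ℝ) = ∑ m ∈ Ioc 0 n, ∑ d ∈ m.divisors, Λ d := by
        simp only [hlog, vonMangoldt_sum]
    _ = ∑ d ∈ Ioc 0 n, ∑ m ∈ Ioc 0 n with d ∣ m, Λ d := by
        refine sum_comm' fun m d => ?_
        simp only [mem_Ioc, Nat.mem_divisors, mem_filter]
        constructor
        · rintro ⟨⟨hm, hmn⟩, hdm, -⟩
          exact ⟨⟨⟨hm, hmn⟩, hdm⟩, Nat.pos_of_dvd_of_pos hdm hm, (Nat.le_of_dvd hm hdm).trans hmn⟩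
        · rintro ⟨⟨⟨hm, hmn⟩, hdm⟩, -⟩
          exact ⟨⟨hm, hmn⟩, hdm, hm.ne'⟩
    _ = ∑ d ∈ Ioc 0 n, Λ d * (n / d : ℕ) := by
        simp only [sum_const, Nat.Ioc_filter_dvd_card_eq_div, nsmul_eq_mul, mul_comm]

theorem log_factorial_le_mul_log (n : ℕ) : log (n ! : ℝ) ≤ n * log n := by
  rcases n.eq_zero_or_pos with rfl | hn
  · simp
  rw [← log_pow]
  exact log_le_log (by positivity) (mod_cast n.factorial_le_pow)

theorem mul_log_sub_le_log_factorial (n : ℕ) : n * log n - n ≤ log (n ! : ℝ) := by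
  rcases n.eq_zero_or_pos with rfl | hn
  · simp
  have h2π : 0 ≤ log (2 * π) := log_nonneg (by linarith [pi_gt_three])
  have := Stirling.le_log_factorial_stirling hn.ne'
  have : 0 ≤ log n := log_nonneg (by exact_mod_cast hn)
  linarith

theorem mul_sum_vonMangoldt_div (n : ℕ) :
    n * ∑ d ∈ Ioc 0 n, Λ d / d = ∑ d ∈ Ioc 0 n, Λ d * ((n : ℝ) / d) := by
  rw [mul_sum]
  exact sum_congr rfl fun d _ => by ring

theorem log_sub_one_le_sum_vonMangoldt_div (n : ℕ) :
    log n - 1 ≤ ∑ d ∈ Ioc 0 n, Λ d / d := by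
  rcases n.eq_zero_or_pos with rfl | hn
  · simp
  have hn' : (0 : ℝ) < n := by exact_mod_cast hn
  refine le_of_mul_le_mul_left ?_ hn'
  calc (n : ℝ) * (log n - 1) = n * log n - n := by ring
    _ ≤ log (n ! : ℝ) := mul_log_sub_le_log_factorial n
    _ = ∑ d ∈ Ioc 0 n, Λ d * (n / d : ℕ) := log_factorial_eq_sum_vonMangoldt_mul n
    _ ≤ ∑ d ∈ Ioc 0 n, Λ d * ((n : ℝ) / d) := by
        gcongr with d
        exact Nat.cast_div_le
    _ = n * ∑ d ∈ Ioc 0 n, Λ d / d := (mul_sum_vonMangoldt_div n).symm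

theorem sum_vonMangoldt_div_le_log_add (n : ℕ) :
    ∑ d ∈ Ioc 0 n, Λ d / d ≤ log n + (log 4 + 4) := by
  rcases n.eq_zero_or_pos with rfl | hn
  · simp only [Ioc_self, sum_empty, Nat.cast_zero, log_zero, zero_add]
    positivity
  have hn' : (0 : ℝ) < n := by exact_mod_cast hn
  refine le_of_mul_le_mul_left ?_ hn'
  have hψ : ψ n = ∑ d ∈ Ioc 0 n, Λ d := by simp [psi]
  calc (n : ℝ) * ∑ d ∈ Ioc 0 n, Λ d / d = ∑ d ∈ Ioc 0 n, Λ d * ((n : ℝ) / d) :=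
        mul_sum_vonMangoldt_div n
    _ ≤ ∑ d ∈ Ioc 0 n, Λ d * ((n / d : ℕ) + 1) := by
        gcongr with d
        rw [← Nat.floor_div_eq_div (K := ℝ)]
        exact (Nat.lt_floor_add_one _).le
    _ = log (n ! : ℝ) + ψ n := by
        simp only [mul_add, mul_one, sum_add_distrib, log_factorial_eq_sum_vonMangoldt_mul, hψ]
    _ ≤ n * log n + (log 4 + 4) * n :=
        add_le_add (log_factorial_le_mul_log n) (psi_le_const_mul_self hn'.le)
    _ = n * (log n + (log 4 + 4)) := by ring

theorem mem_primesIn {X Y : ℝ} {p : ℕ} : p ∈ primesIn X Y ↔ p.Prime ∧ X < p ∧ p ≤ Y := by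
  simp only [primesIn, mem_filter, mem_range, and_iff_right_iff_imp]
  rintro ⟨hp, -, hpY⟩
  exact Nat.lt_succ_of_le ((Nat.le_floor_iff' hp.ne_zero).2 hpY)

theorem primesIn_eq_filter_Ioc (X Y : ℝ) : primesIn X Y = {p ∈ Ioc ⌊X⌋₊ ⌊Y⌋₊ | p.Prime} := by
  ext p
  simp only [mem_primesIn, mem_filter, mem_Ioc]
  constructor
  · rintro ⟨hp, hXp, hpY⟩
    exact ⟨⟨(Nat.floor_lt' hp.ne_zero).2 hXp, (Nat.le_floor_iff' hp.ne_zero).2 hpY⟩, hp⟩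
  · rintro ⟨⟨hXp, hpY⟩, hp⟩
    exact ⟨hp, (Nat.floor_lt' hp.ne_zero).1 hXp, (Nat.le_floor_iff' hp.ne_zero).1 hpY⟩

theorem sum_primesIn_log_div_add_sum_not_prime (X Y : ℝ) :
    ∑ p ∈ primesIn X Y, log p / p + ∑ d ∈ Ioc ⌊X⌋₊ ⌊Y⌋₊ with ¬d.Prime, Λ d / d =
      ∑ d ∈ Ioc ⌊X⌋₊ ⌊Y⌋₊, Λ d / d := by
  rw [← sum_filter_add_sum_filter_not (Ioc ⌊X⌋₊ ⌊Y⌋₊) Nat.Prime, primesIn_eq_filter_Ioc]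
  congr 1
  exact sum_congr rfl fun p hp => by rw [vonMangoldt_apply_prime (mem_filter.1 hp).2]

theorem sum_not_prime_vonMangoldt_div_le {X : ℝ} (hX : 0 < X) (Y : ℝ) :
    ∑ d ∈ Ioc ⌊X⌋₊ ⌊Y⌋₊ with ¬d.Prime, Λ d / d ≤ (ψ Y - θ Y) / X := by
  rw [psi_sub_theta_eq_sum_not_prime, sum_div]
  calc ∑ d ∈ Ioc ⌊X⌋₊ ⌊Y⌋₊ with ¬d.Prime, Λ d / d
      ≤ ∑ d ∈ Ioc ⌊X⌋₊ ⌊Y⌋₊ with ¬d.Prime, Λ d / X := by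
        gcongr with d hd
        exact (Nat.lt_of_floor_lt (mem_Ioc.1 (mem_filter.1 hd).1).1).le
    _ ≤ ∑ d ∈ Ioc 0 ⌊Y⌋₊ with ¬d.Prime, Λ d / X := by
        gcongr
        exact Nat.zero_le _

theorem log_natFloor_le {x : ℝ} (hx : 1 ≤ x) : log ⌊x⌋₊ ≤ log x :=
  log_le_log (by simpa [Nat.floor_pos] using hx) (Nat.floor_le (by linarith))

theorem log_sub_log_two_le_log_natFloor {x : ℝ} (hx : 1 ≤ x) : log x - log 2 ≤ log ⌊x⌋₊ := by
  rw [← log_div (by linarith) two_ne_zero]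
  exact log_le_log (by positivity) (Nat.div_two_lt_floor hx).le

theorem abs_sum_Ioc_vonMangoldt_div_sub_log_div_le {x y : ℝ} (hx : 1 ≤ x) (hxy : x ≤ y) :
    |∑ d ∈ Ioc ⌊x⌋₊ ⌊y⌋₊, Λ d / d - log (y / x)| ≤ log 2 + log 4 + 5 := by
  have hy : 1 ≤ y := hx.trans hxy
  have hwindow := sum_Ioc_consecutive (fun d => Λ d / d) (Nat.zero_le ⌊x⌋₊) (Nat.floor_mono hxy)
  rw [log_div (by positivity) (by positivity), abs_sub_le_iff]
  constructor <;>
  linarith [log_sub_one_le_sum_vonMangoldt_div ⌊x⌋₊, log_sub_one_le_sum_vonMangoldt_div ⌊y⌋₊,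
    sum_vonMangoldt_div_le_log_add ⌊x⌋₊, sum_vonMangoldt_div_le_log_add ⌊y⌋₊,
    log_natFloor_le hx, log_natFloor_le hy,
    log_sub_log_two_le_log_natFloor hx, log_sub_log_two_le_log_natFloor hy]

theorem exists_abs_sum_primesIn_sq_log_div_sub_log_le :
    ∃ C, ∀ X : ℝ, 1 ≤ X → |∑ p ∈ primesIn X (X ^ 2), log p / p - log X| ≤ C := by
  obtain ⟨C, hC⟩ := psi_sub_theta_le_mul_sqrt
  refine ⟨log 2 + log 4 + 5 + |C|, fun X hX => ?_⟩
  have hX0 : 0 < X := by linarith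
  have hΛ := abs_sum_Ioc_vonMangoldt_div_sub_log_div_le hX (le_self_pow₀ hX two_ne_zero)
  rw [show X ^ 2 / X = X by field_simp] at hΛ
  have hnonprime : ∑ d ∈ Ioc ⌊X⌋₊ ⌊X ^ 2⌋₊ with ¬d.Prime, Λ d / d ≤ |C| := by
    refine (sum_not_prime_vonMangoldt_div_le hX0 _).trans ?_
    rw [div_le_iff₀ hX0]
    calc ψ (X ^ 2) - θ (X ^ 2) ≤ C * √(X ^ 2) := hC _
      _ ≤ |C| * X := by rw [sqrt_sq hX0.le]; gcongr; exact le_abs_self C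
  have hnonprime_nonneg : 0 ≤ ∑ d ∈ Ioc ⌊X⌋₊ ⌊X ^ 2⌋₊ with ¬d.Prime, Λ d / d := by positivity
  have hsplit := sum_primesIn_log_div_add_sum_not_prime X (X ^ 2)
  rw [abs_sub_le_iff] at hΛ ⊢
  constructor <;> linarith [abs_nonneg C]

theorem log_mem_Icc_of_mem_primesIn_sq {X : ℝ} (hX : 0 < X) {p : ℕ}
    (hp : p ∈ primesIn X (X ^ 2)) : log p ∈ Set.Icc (log X) (2 * log X) := by
  obtain ⟨-, hXp, hpX⟩ := mem_primesIn.1 hp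
  refine ⟨log_le_log hX hXp.le, ?_⟩
  calc log p ≤ log (X ^ 2) := log_le_log (by linarith) hpX
    _ = 2 * log X := by rw [log_pow, Nat.cast_ofNat]

theorem mul_sum_log_div_le_sum_sq_log_div_mul {s : Finset ℕ} {m c : ℝ} {v : ℕ → ℝ} (hc : 0 ≤ c)
    (hm : ∀ p ∈ s, m ≤ log p) (hv : ∀ p ∈ s, c * p ≤ v p) :
    c * m * ∑ p ∈ s, log p / p ≤ ∑ p ∈ s, (log p / p) ^ 2 * v p := by
  rw [mul_sum]
  refine sum_le_sum fun p hp => ?_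
  calc c * m * (log p / p) ≤ c * log p * (log p / p) := by gcongr; exact hm p hp
    _ = (log p / p) ^ 2 * (c * p) := by
        rcases eq_or_ne (p : ℝ) 0 with h | h
        · simp [h]
        · field_simp
    _ ≤ (log p / p) ^ 2 * v p := by gcongr; exact hv p hp

theorem sum_sq_log_div_mul_le_mul_sum_log_div {s : Finset ℕ} {M c : ℝ} {v : ℕ → ℝ} (hc : 0 ≤ c)
    (hM : ∀ p ∈ s, log p ≤ M) (hv : ∀ p ∈ s, v p ≤ c * p) :
    ∑ p ∈ s, (log p / p) ^ 2 * v p ≤ c * M * ∑ p ∈ s, log p / p := by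
  rw [mul_sum]
  refine sum_le_sum fun p hp => ?_
  calc (log p / p) ^ 2 * v p ≤ (log p / p) ^ 2 * (c * p) := by gcongr; exact hv p hp
    _ = c * log p * (log p / p) := by
        rcases eq_or_ne (p : ℝ) 0 with h | h
        · simp [h]
        · field_simp
    _ ≤ c * M * (log p / p) := by gcongr; exact hM p hp

theorem ProbabilityTheory.IndepFun.variance_sum_const_mul {Ω ι : Type*} [MeasurableSpace Ω]
    {μ : Measure Ω} {X : ι → Ω → ℝ} {s : Finset ι} (hX : ∀ i ∈ s, MemLp (X i) 2 μ)
    (hindep : (s : Set ι).Pairwise fun i j => X i ⟂ᵢ[μ] X j) (c : ι → ℝ) :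
    variance (fun ω => ∑ i ∈ s, c i * X i ω) μ = ∑ i ∈ s, c i ^ 2 * variance (X i) μ := by
  have hfun : (fun ω => ∑ i ∈ s, c i * X i ω) = ∑ i ∈ s, fun ω => c i * X i ω := by
    ext ω; simp
  rw [hfun, IndepFun.variance_sum (fun i hi => (hX i hi).const_mul (c i))
    fun i hi j hj hij => (hindep hi hj hij).comp (measurable_const_mul (c i))
      (measurable_const_mul (c j))]
  exact sum_congr rfl fun i _ => variance_const_mul (c i) (X i) μ

theorem variance_square_range_weighted_general
    {Ω : Type*} [MeasurableSpace Ω]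
    (P : Measure Ω) [IsProbabilityMeasure P] (a : ℕ → Ω → ℝ)
    (hL2 : ∀ p : ℕ, p.Prime → MemLp (a p) 2 P)
    (hindep : iIndepFun (fun p : {p : ℕ // p.Prime} => a p.1) P)
    (c₁ c₂ : ℝ) (hc₁ : 0 < c₁) (hc₂ : 0 < c₂)
    (hvar : ∀ p : ℕ, p.Prime →
      c₁ * p ≤ variance (a p) P ∧ variance (a p) P ≤ c₂ * p) :
    ∃ d₁ d₂ : ℝ, 0 < d₁ ∧ 0 < d₂ ∧ ∃ X₀ : ℝ, ∀ X : ℝ, X₀ ≤ X →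
      d₁ ≤ variance (fun ω => (Real.log X)⁻¹ * ∑ p ∈ primesIn X (X ^ 2), a p ω * Real.log p / p) P ∧
        variance (fun ω => (Real.log X)⁻¹ * ∑ p ∈ primesIn X (X ^ 2), a p ω * Real.log p / p) P ≤ d₂ := by
  obtain ⟨C, hC⟩ := exists_abs_sum_primesIn_sq_log_div_sub_log_le
  refine ⟨c₁ / 2, 3 * c₂, by positivity, by positivity, max 2 (exp (2 * C)), fun X hX => ?_⟩
  have hX2 : 2 ≤ X := le_of_max_le_left hX
  have hL : 0 < log X := log_pos (by linarith)
  have hCL : 2 * C ≤ log X := (le_log_iff_exp_le (by linarith)).2 (le_of_max_le_right hX)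
  set s := primesIn X (X ^ 2)
  have hprime : ∀ p ∈ s, p.Prime := fun p hp => (mem_primesIn.1 hp).1
  have hvariance : variance (fun ω => (log X)⁻¹ * ∑ p ∈ s, a p ω * log p / p) P =
      (log X)⁻¹ ^ 2 * ∑ p ∈ s, (log p / p) ^ 2 * variance (a p) P := by
    rw [variance_const_mul, ← IndepFun.variance_sum_const_mul (fun p hp => hL2 p (hprime p hp))
      fun p hp q hq hpq => hindep.indepFun (i := ⟨p, hprime p hp⟩) (j := ⟨q, hprime q hq⟩)
        (ne_of_apply_ne Subtype.val hpq)]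
    congr 2 with ω
    exact sum_congr rfl fun p _ => by ring
  have hS := abs_sub_le_iff.1 (hC X (by linarith))
  have hlower := mul_sum_log_div_le_sum_sq_log_div_mul hc₁.le
    (fun p hp => (log_mem_Icc_of_mem_primesIn_sq (by linarith) hp).1)
    (fun p hp => (hvar p (hprime p hp)).1)
  have hupper := sum_sq_log_div_mul_le_mul_sum_log_div hc₂.le
    (fun p hp => (log_mem_Icc_of_mem_primesIn_sq (by linarith) hp).2)
    (fun p hp => (hvar p (hprime p hp)).2)
  rw [hvariance]
  constructor
  · calc c₁ / 2 = (log X)⁻¹ ^ 2 * (c₁ * log X * (log X / 2)) := by field_simp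
      _ ≤ (log X)⁻¹ ^ 2 * (c₁ * log X * ∑ p ∈ s, log p / p) := by gcongr; linarith
      _ ≤ _ := by gcongr
  · calc _ ≤ (log X)⁻¹ ^ 2 * (c₂ * (2 * log X) * ∑ p ∈ s, log p / p) := by gcongr
      _ ≤ (log X)⁻¹ ^ 2 * (c₂ * (2 * log X) * (3 * log X / 2)) := by gcongr; linarith
      _ = 3 * c₂ := by field_simp

/-- Under the independence and variance hypotheses on `(a_p)`, there exist constants `d₁, d₂ > 0` and `X₀` such that for every real `X ≥ X₀`, the random variable `(1/log X)·∑_{X < p ≤ X²} a_p·(log p)/p` has variance between `d₁` and `d₂`. -/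
theorem variance_square_range_weighted
    {Ω : Type*} [MeasurableSpace Ω]
    (P : Measure Ω) [IsProbabilityMeasure P] (a : ℕ → Ω → ℝ)
    (hmeas : ∀ p : ℕ, p.Prime → Measurable (a p))
    (hL2 : ∀ p : ℕ, p.Prime → MemLp (a p) 2 P)
    (hindep : iIndepFun (fun p : {p : ℕ // p.Prime} => a p.1) P)
    (c₁ c₂ : ℝ) (hc₁ : 0 < c₁) (hc₂ : 0 < c₂)
    (hvar : ∀ p : ℕ, p.Prime →
      c₁ * p ≤ variance (a p) P ∧ variance (a p) P ≤ c₂ * p) :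
    ∃ d₁ d₂ : ℝ, 0 < d₁ ∧ 0 < d₂ ∧ ∃ X₀ : ℝ, ∀ X : ℝ, X₀ ≤ X →
      d₁ ≤ variance (fun ω => (Real.log X)⁻¹ * ∑ p ∈ primesIn X (X ^ 2), a p ω * Real.log p / p) P ∧
        variance (fun ω => (Real.log X)⁻¹ * ∑ p ∈ primesIn X (X ^ 2), a p ω * Real.log p / p) P ≤ d₂ :=
  variance_square_range_weighted_general P a hL2 hindep c₁ c₂ hc₁ hc₂ hvar
end
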